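/- ∑_{k=1}^∞ (27/20)^k / (k · C(3k,k)) = (√15/2)·arctan(√15 − √12) − (1/4)·log(5/2). -/

import Mathlib

/-!
Since `1 / ((k + 1) * C(3k + 3, k + 1))` is the Beta integral `∫₀¹ t^k (1 - t)^(2k + 2) dt`,
the series is `∫₀¹ x (1 - t)² / (1 - x t (1 - t)²) dt` with `x = 27/20` (a geometric series
under the integral, dominated because `t (1 - t)² ≤ 4/27`). For this `x` the cubic denominator
factors as `(5 - 3t)(9t² - 3t + 4) / 20`, so the integrand has an elementary primitive made of two
logarithms and an arctangent; the arctangent values combine to `3 arctan (√15 - √12)` by the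
triple-angle formula.
-/

open Real intervalIntegral MeasureTheory
open scoped Nat

theorem integral_pow_mul_one_sub_pow (a b : ℕ) :
    ∫ t in (0:ℝ)..1, t ^ a * (1 - t) ^ b = (a ! * b ! : ℝ) / (a + b + 1)! := by
  induction b generalizing a with
  | zero =>
    simp only [pow_zero, mul_one, integral_pow, one_pow, zero_pow (Nat.succ_ne_zero a), sub_zero,
      add_zero, Nat.factorial_zero, Nat.factorial_succ]
    push_cast
    field_simp
  | succ b ih =>
    have hint : ∀ n, IntervalIntegrable (fun t : ℝ => t ^ n * (1 - t) ^ b) volume 0 1 :=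
      fun n => by apply Continuous.intervalIntegrable; fun_prop
    calc ∫ t in (0:ℝ)..1, t ^ a * (1 - t) ^ (b + 1)
        = ∫ t in (0:ℝ)..1, t ^ a * (1 - t) ^ b - t ^ (a + 1) * (1 - t) ^ b := by
          congr 1; ext t; ring
      _ = (a ! * (b + 1)! : ℝ) / (a + (b + 1) + 1)! := by
          rw [integral_sub (hint a) (hint (a + 1)), ih, ih, show a + 1 + b + 1 = a + b + 1 + 1 by ring,
            show a + (b + 1) + 1 = a + b + 1 + 1 by ring]
          push_cast [Nat.factorial_succ]
          field_simp
          ring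

theorem integral_pow_mul_one_sub_pow_eq_inv (a b : ℕ) :
    ∫ t in (0:ℝ)..1, t ^ a * (1 - t) ^ b = (((a : ℝ) + 1) * ((a + b + 1).choose (a + 1) : ℕ))⁻¹ := by
  have h := Nat.add_choose_mul_factorial_mul_factorial b (a + 1)
  rw [show b + (a + 1) = a + b + 1 by ring] at h
  rw [integral_pow_mul_one_sub_pow, ← h]
  push_cast [Nat.factorial_succ]
  field_simp

theorem mul_one_sub_sq_le {t : ℝ} (ht : t ≤ 1) : t * (1 - t) ^ 2 ≤ 4 / 27 := by
  nlinarith [sq_nonneg (3 * t - 1)]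

theorem hasSum_pow_div_succ_mul_choose {x : ℝ} (hx : |x| < 27 / 4) :
    HasSum (fun k : ℕ => x ^ (k + 1) / (((k : ℝ) + 1) * (((3 * (k + 1)).choose (k + 1) : ℕ) : ℝ)))
      (∫ t in (0:ℝ)..1, x * (1 - t) ^ 2 / (1 - x * (t * (1 - t) ^ 2))) := by
  set r := |x| * (4 / 27) with hr
  have hr0 : 0 ≤ r := by positivity
  have hr1 : r < 1 := by rw [hr]; linarith
  have hterm : ∀ k : ℕ, x ^ (k + 1) / (((k : ℝ) + 1) * (((3 * (k + 1)).choose (k + 1) : ℕ) : ℝ))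
      = ∫ t in (0:ℝ)..1, x * (1 - t) ^ 2 * (x * (t * (1 - t) ^ 2)) ^ k := by
    intro k
    rw [div_eq_mul_inv, show 3 * (k + 1) = k + (2 * k + 2) + 1 by ring,
      ← integral_pow_mul_one_sub_pow_eq_inv, ← intervalIntegral.integral_const_mul]
    congr 1; ext t; rw [mul_pow, mul_pow, ← pow_mul]; ring
  simp_rw [hterm]
  have hsmall : ∀ t ∈ Set.uIoc (0:ℝ) 1, |x * (t * (1 - t) ^ 2)| ≤ r := by
    intro t ht
    rw [Set.uIoc_of_le zero_le_one] at ht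
    have : 0 ≤ t * (1 - t) ^ 2 := by have := ht.1.le; positivity
    rw [abs_mul, abs_of_nonneg this]
    exact mul_le_mul_of_nonneg_left (mul_one_sub_sq_le ht.2) (abs_nonneg x)
  refine hasSum_integral_of_dominated_convergence (fun k _ => |x| * r ^ k)
    (fun k => Continuous.aestronglyMeasurable (by fun_prop)) (fun k => ?_) ?_ ?_ ?_
  · refine Filter.Eventually.of_forall fun t ht => ?_
    have h1t : (1 - t) ^ 2 ≤ 1 := by
      rw [Set.uIoc_of_le zero_le_one] at ht
      nlinarith [ht.1, ht.2]
    calc ‖x * (1 - t) ^ 2 * (x * (t * (1 - t) ^ 2)) ^ k‖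
        = |x| * (1 - t) ^ 2 * |x * (t * (1 - t) ^ 2)| ^ k := by
          rw [Real.norm_eq_abs, abs_mul, abs_mul, abs_of_nonneg (sq_nonneg (1 - t)), abs_pow]
      _ ≤ |x| * 1 * r ^ k := by gcongr; exact hsmall t ht
      _ = |x| * r ^ k := by ring
  · exact Filter.Eventually.of_forall fun t _ => (summable_geometric_of_lt_one hr0 hr1).mul_left _
  · exact intervalIntegrable_const
  · refine Filter.Eventually.of_forall fun t ht => ?_
    exact (hasSum_geometric_of_abs_lt_one ((hsmall t ht).trans_lt hr1)).mul_left _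

theorem three_mul_arctan {c : ℝ} (hc : 3 * c ^ 2 < 1) :
    3 * arctan c = arctan ((3 * c - c ^ 3) / (1 - 3 * c ^ 2)) := by
  have hc1 : 1 - c ^ 2 ≠ 0 := by nlinarith
  have hc3 : 1 - 3 * c ^ 2 ≠ 0 := by linarith
  have hdouble : c * c < 1 := by nlinarith
  have htriple : (c + c) / (1 - c * c) * c < 1 := by
    rw [div_mul_eq_mul_div, div_lt_one (by nlinarith)]; nlinarith
  rw [show 3 * arctan c = (arctan c + arctan c) + arctan c by ring, arctan_add hdouble,
    arctan_add htriple]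
  congr 1
  field_simp
  ring

theorem three_mul_arctan_sqrt_fifteen_sub_sqrt_twelve :
    3 * arctan (√15 - √12) = arctan (3 * √15 / 5) := by
  have hs : √15 ^ 2 = 15 := sq_sqrt (by norm_num)
  have hr : √12 ^ 2 = 12 := sq_sqrt (by norm_num)
  have hsr : 40 / 3 < √15 * √12 := by
    nlinarith [mul_pos (sqrt_pos.2 (by norm_num : (0:ℝ) < 15)) (sqrt_pos.2 (by norm_num : (0:ℝ) < 12))]
  have hc : 3 * (√15 - √12) ^ 2 < 1 := by nlinarith
  rw [three_mul_arctan hc]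
  congr 1
  rw [div_eq_div_iff (by linarith) (by norm_num)]
  linear_combination ((4 * √15 - 3 * √12) * hs + (-6 * √15 + 5 * √12) * hr)

noncomputable def seriesPrimitive (t : ℝ) : ℝ :=
  -(1 / 6) * log (5 - 3 * t) - 5 / 12 * log (9 * t ^ 2 - 3 * t + 4)
    + √15 / 6 * arctan ((6 * t - 1) / √15)

theorem hasDerivAt_seriesPrimitive {t : ℝ} (ht : 5 - 3 * t ≠ 0) :
    HasDerivAt seriesPrimitive (27 / 20 * (1 - t) ^ 2 / (1 - 27 / 20 * (t * (1 - t) ^ 2))) t := by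
  have hs : √15 ^ 2 = 15 := sq_sqrt (by norm_num)
  have hq : 0 < 9 * t ^ 2 - 3 * t + 4 := by nlinarith [sq_nonneg (6 * t - 1)]
  have hlin : HasDerivAt (fun x : ℝ => 5 - 3 * x) (-3) t := by
    simpa using ((hasDerivAt_id t).const_mul 3).const_sub 5
  have hquad : HasDerivAt (fun x : ℝ => 9 * x ^ 2 - 3 * x + 4) (18 * t - 3) t := by
    simpa using (((hasDerivAt_pow 2 t).const_mul 9).sub ((hasDerivAt_id t).const_mul 3)).add_const 4
      |>.congr_deriv (by ring)
  have harg : HasDerivAt (fun x : ℝ => (6 * x - 1) / √15) (6 / √15) t := by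
    simpa using (((hasDerivAt_id t).const_mul 6).sub_const 1).div_const √15
  refine ((((hlin.log ht).const_mul (-(1 / 6))).sub ((hquad.log hq.ne').const_mul (5 / 12))).add
    (harg.arctan.const_mul (√15 / 6))).congr_deriv ?_
  have hfactor : 1 - 27 / 20 * (t * (1 - t) ^ 2) = (5 - 3 * t) * (9 * t ^ 2 - 3 * t + 4) / 20 := by
    ring
  have harg_sq : 1 + ((6 * t - 1) / √15) ^ 2 = 12 * (9 * t ^ 2 - 3 * t + 4) / 45 := by
    rw [div_pow, hs]; ring
  -- the shape in which `field_simp` meets the quadratic factor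
  have hq' : t * (t * 9 - 3) + 4 ≠ 0 := by linarith [hq]
  rw [hfactor, harg_sq]
  field_simp
  ring

theorem integral_eq_seriesPrimitive :
    ∫ t in (0:ℝ)..1, 27 / 20 * (1 - t) ^ 2 / (1 - 27 / 20 * (t * (1 - t) ^ 2))
      = seriesPrimitive 1 - seriesPrimitive 0 := by
  have hden : ∀ t ∈ Set.uIcc (0:ℝ) 1, 1 - 27 / 20 * (t * (1 - t) ^ 2) ≠ 0 := by
    intro t ht
    rw [Set.uIcc_of_le zero_le_one] at ht
    nlinarith [mul_one_sub_sq_le ht.2]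
  refine integral_eq_sub_of_hasDerivAt (fun t ht => hasDerivAt_seriesPrimitive ?_) ?_
  · rw [Set.uIcc_of_le zero_le_one] at ht
    linarith [ht.2]
  · exact ContinuousOn.intervalIntegrable (by fun_prop (disch := assumption))

theorem seriesPrimitive_one_sub_zero :
    seriesPrimitive 1 - seriesPrimitive 0 = √15 / 2 * arctan (√15 - √12) - 1 / 4 * log (5 / 2) := by
  have hs : √15 ^ 2 = 15 := sq_sqrt (by norm_num)
  have harctan : arctan (5 / √15) - arctan (-1 / √15) = 3 * arctan (√15 - √12) := by
    have hprod : 5 / √15 * (1 / √15) < 1 := by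
      rw [div_mul_div_comm, ← sq, hs]; norm_num
    rw [three_mul_arctan_sqrt_fifteen_sub_sqrt_twelve, neg_div, arctan_neg, sub_neg_eq_add,
      arctan_add hprod]
    congr 1
    field_simp
    rw [hs]; ring
  have hlog10 : log 10 = log 2 + log 5 := by
    rw [show (10:ℝ) = 2 * 5 by norm_num, log_mul two_ne_zero (by norm_num)]
  have hlog4 : log 4 = 2 * log 2 := by
    rw [show (4:ℝ) = 2 ^ 2 by norm_num, log_pow]; norm_num
  have hlog52 : log (5 / 2) = log 5 - log 2 := log_div (by norm_num) two_ne_zero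
  have h1 : seriesPrimitive 1 = -(1 / 6) * log 2 - 5 / 12 * log 10 + √15 / 6 * arctan (5 / √15) := by
    norm_num [seriesPrimitive]
  have h0 : seriesPrimitive 0 = -(1 / 6) * log 5 - 5 / 12 * log 4 + √15 / 6 * arctan (-1 / √15) := by
    norm_num [seriesPrimitive]
  rw [h1, h0]
  linear_combination √15 / 6 * harctan - 5 / 12 * hlog10 + 5 / 12 * hlog4 + 1 / 4 * hlog52

theorem stmt_15 :
    ∑' k : ℕ, (27/20 : ℝ)^(k+1) / ((((k:ℝ)+1)) * (((3*(k+1)).choose (k+1) : ℕ) : ℝ)) =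
    (Real.sqrt 15/2)*Real.arctan (Real.sqrt 15 - Real.sqrt 12) - (1/4)*Real.log (5/2) := by
  rw [(hasSum_pow_div_succ_mul_choose (by norm_num [abs_of_pos])).tsum_eq,
    integral_eq_seriesPrimitive, seriesPrimitive_one_sub_zero]
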